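/- Let M = ℝ^{2n+1} with coordinates (q_1,…,q_n, p_1,…,p_n, y) and the Poisson bivector field Π = Σ_{i=1}^n ∂/∂q_i ∧ ∂/∂p_i, and let A = T*M be the cotangent Lie algebroid of (M,Π), with the trivial connection ∇^A determined by ∇^A(fα) = df ⊗ α for f ∈ C^∞(M) and constant-coefficient 1-forms α. Define the vector field μ = −Σ_{i=1}^n (q_i ∂/∂q_i + p_i ∂/∂p_i), viewed as a section of A* = TM. Then for every 1-form α = Σ_i(a_i dq_i + b_i dp_i) + c dy one has ⟨∇^A μ, α⟩ = −Σ_i(a_i dq_i + b_i dp_i) and Π♯⟨∇^A μ, α⟩ = −Π♯(α); hence μ satisfies ρ(α) = −Π♯⟨∇^A μ, α⟩ for all α ∈ Ω^1(M), i.e. μ is a momentum section of A with respect to ∇^A on Ω^1(M). -/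

import Mathlib

/-!
STATEMENT 4: On `M = ℝ^{2n+1}` with coordinates `(q,p,y)` and Poisson bivector
`Π = Σ ∂/∂q_i ∧ ∂/∂p_i`, consider the cotangent Lie algebroid `A = T*M` (anchor
`ρ = Π♯`) with the trivial connection, and the vector field
`μ = −Σ (q_i ∂/∂q_i + p_i ∂/∂p_i)` viewed as a section of `A* = TM`. Then for
every 1-form `α = Σ(a_i dq_i + b_i dp_i) + c dy` one has
`⟨∇^A μ, α⟩ = −Σ(a_i dq_i + b_i dp_i)` and `Π♯⟨∇^A μ, α⟩ = −Π♯(α)`; hence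
`ρ(α) = −Π♯⟨∇^A μ, α⟩`, i.e. `μ` is a momentum section on `Ω¹(M)`.

We model `M = ℝ^{2n+1}` as `V n = (Fin n → ℝ) × (Fin n → ℝ) × ℝ`, a point being
`(q, p, y)`; a tangent vector is an element of `V n` (components in the frame
`∂/∂q_i, ∂/∂p_i, ∂/∂y`), and a 1-form is a map `M → V n` whose value `(a,b,c)`
represents `Σ a_i dq_i + Σ b_i dp_i + c dy`.
-/

noncomputable section

open scoped BigOperators

/-- `ℝ^{2n+1}` split as `(q, p, y)`. -/
abbrev V (n : ℕ) : Type := (Fin n → ℝ) × (Fin n → ℝ) × ℝ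

/-- The canonical pairing of a covector `(a,b,c)` with a tangent vector `(u,v,w)`:
`⟨Σ a_i dq_i + Σ b_i dp_i + c dy, Σ u_i ∂q_i + Σ v_i ∂p_i + w ∂y⟩`. -/
def pairV {n : ℕ} (α X : V n) : ℝ :=
  (∑ i : Fin n, α.1 i * X.1 i) + (∑ i : Fin n, α.2.1 i * X.2.1 i) + α.2.2 * X.2.2

/-- The coordinate tangent vector `∂/∂q_i`. -/
def eQ {n : ℕ} (i : Fin n) : V n := (Pi.single i 1, 0, 0)

/-- The coordinate tangent vector `∂/∂p_i`. -/
def eP {n : ℕ} (i : Fin n) : V n := (0, Pi.single i 1, 0)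

/-- The bundle map `Π♯` of the bivector `Π = Σ ∂/∂q_i ∧ ∂/∂p_i`, applied to a
covector given as a functional `η`: `Π♯(η) = Σ (η(∂p_i) ∂q_i − η(∂q_i) ∂p_i)`
(so that `⟨β, Π♯ η⟩ = ⟨β ∧ η, Π⟩`). -/
def sharpOf {n : ℕ} (η : V n → ℝ) : V n :=
  (fun i => η (eP i), fun i => - η (eQ i), 0)

/-- The vector field `μ = −Σ (q_i ∂/∂q_i + p_i ∂/∂p_i)`, a section of `A* = TM`. -/
def muField {n : ℕ} : V n → V n := fun z => (- z.1, - z.2.1, 0)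

/-- The 1-form `⟨∇^A μ, α⟩ : X ↦ (∇^A_X μ)(α) = X(⟨μ,α⟩) − ⟨μ, ∇^A_X α⟩`, with
`∇^A` the trivial connection (`∇^A(fα) = df ⊗ α`, componentwise derivative) and
its dual (also trivial) connection on `A* = TM`. -/
def nablaMuForm {n : ℕ} (α : V n → V n) (z X : V n) : ℝ :=
  fderiv ℝ (fun w => pairV (α w) (muField w)) z X - pairV (fderiv ℝ α z X) (muField z)

def PQ (n : ℕ) (i : Fin n) : V n →L[ℝ] ℝ :=
  (ContinuousLinearMap.proj i).comp (ContinuousLinearMap.fst ℝ (Fin n → ℝ) ((Fin n → ℝ) × ℝ))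

def PP (n : ℕ) (i : Fin n) : V n →L[ℝ] ℝ :=
  (ContinuousLinearMap.proj i).comp
    ((ContinuousLinearMap.fst ℝ (Fin n → ℝ) ℝ).comp
      (ContinuousLinearMap.snd ℝ (Fin n → ℝ) ((Fin n → ℝ) × ℝ)))

lemma key {n : ℕ} (α : V n → V n) (hα : Differentiable ℝ α) (z X : V n) :
    nablaMuForm α z X
      = - ((∑ i : Fin n, (α z).1 i * X.1 i) + ∑ i : Fin n, (α z).2.1 i * X.2.1 i) := by
  set D := fderiv ℝ α z with hD
  have hA : HasFDerivAt α D z := (hα z).hasFDerivAt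
  have hq : ∀ i : Fin n, HasFDerivAt (fun w : V n => (α w).1 i * w.1 i)
      ((α z).1 i • PQ n i + z.1 i • ((PQ n i).comp D)) z := by
    intro i
    exact (((PQ n i).hasFDerivAt.comp z hA)).mul ((PQ n i).hasFDerivAt)
  have hp : ∀ i : Fin n, HasFDerivAt (fun w : V n => (α w).2.1 i * w.2.1 i)
      ((α z).2.1 i • PP n i + z.2.1 i • ((PP n i).comp D)) z := by
    intro i
    exact (((PP n i).hasFDerivAt.comp z hA)).mul ((PP n i).hasFDerivAt)
  have hq' : HasFDerivAt (fun w : V n => ∑ i : Fin n, (α w).1 i * w.1 i)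
      (∑ i : Fin n, ((α z).1 i • PQ n i + z.1 i • ((PQ n i).comp D))) z :=
    HasFDerivAt.fun_sum (fun i _ => hq i)
  have hp' : HasFDerivAt (fun w : V n => ∑ i : Fin n, (α w).2.1 i * w.2.1 i)
      (∑ i : Fin n, ((α z).2.1 i • PP n i + z.2.1 i • ((PP n i).comp D))) z :=
    HasFDerivAt.fun_sum (fun i _ => hp i)
  have hFeq : (fun w : V n => pairV (α w) (muField w))
      = fun w : V n => -((∑ i : Fin n, (α w).1 i * w.1 i) + ∑ i : Fin n, (α w).2.1 i * w.2.1 i) := by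
    funext w
    simp [pairV, muField, Finset.sum_add_distrib, mul_neg, ← Finset.sum_neg_distrib]
    ring
  have hF : HasFDerivAt (fun w : V n => pairV (α w) (muField w))
      (-((∑ i : Fin n, ((α z).1 i • PQ n i + z.1 i • ((PQ n i).comp D)))
        + (∑ i : Fin n, ((α z).2.1 i • PP n i + z.2.1 i • ((PP n i).comp D))))) z := by
    rw [hFeq]
    exact (hq'.add hp').neg
  have hfd := hF.fderiv
  have hval : (PQ : ∀ n, Fin n → _) = PQ := rfl
  rw [nablaMuForm, hfd, ← hD]
  simp only [ContinuousLinearMap.neg_apply, ContinuousLinearMap.add_apply,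
    ContinuousLinearMap.coe_sum', Finset.sum_apply, ContinuousLinearMap.smul_apply,
    ContinuousLinearMap.coe_comp', Function.comp_apply, smul_eq_mul]
  have hPQ : ∀ (i : Fin n) (w : V n), PQ n i w = w.1 i := fun _ _ => rfl
  have hPP : ∀ (i : Fin n) (w : V n), PP n i w = w.2.1 i := fun _ _ => rfl
  simp only [hPQ, hPP]
  simp only [pairV, muField, Pi.neg_apply, mul_neg, mul_zero, add_zero,
    Finset.sum_add_distrib, Finset.sum_neg_distrib]
  have comm : ∀ (f g : Fin n → ℝ), ∑ x : Fin n, f x * g x = ∑ x : Fin n, g x * f x :=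
    fun f g => Finset.sum_congr rfl fun x _ => mul_comm _ _
  rw [comm (fun x => (D X).1 x) (fun x => z.1 x), comm (fun x => (D X).2.1 x) (fun x => z.2.1 x)]
  ring

theorem cotangent_algebroid_momentum_section_on_R2n1
    (n : ℕ) (α : V n → V n) (hα : Differentiable ℝ α) :
    -- `⟨∇^A μ, α⟩ = −Σ(a_i dq_i + b_i dp_i)`
    (∀ z X : V n,
      nablaMuForm α z X
        = - ((∑ i : Fin n, (α z).1 i * X.1 i) + ∑ i : Fin n, (α z).2.1 i * X.2.1 i)) ∧
    -- `Π♯⟨∇^A μ, α⟩ = −Π♯(α)`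
    (∀ z : V n, sharpOf (nablaMuForm α z) = - sharpOf (fun X => pairV (α z) X)) ∧
    -- hence `ρ(α) = −Π♯⟨∇^A μ, α⟩` (the anchor of `T*M` being `ρ = Π♯`)
    (∀ z : V n, sharpOf (fun X => pairV (α z) X) = - sharpOf (nablaMuForm α z)) := by
  refine ⟨key α hα, ?_, ?_⟩
  · intro z
    have h := key α hα z
    refine Prod.ext ?_ (Prod.ext ?_ ?_)
    · funext i
      simp [sharpOf, h, pairV, eP, Pi.single_apply, mul_comm]
    · funext i
      simp [sharpOf, h, pairV, eQ, Pi.single_apply, mul_comm]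
    · simp [sharpOf]
  · intro z
    have h := key α hα z
    refine Prod.ext ?_ (Prod.ext ?_ ?_)
    · funext i
      simp [sharpOf, h, pairV, eP, Pi.single_apply, mul_comm]
    · funext i
      simp [sharpOf, h, pairV, eQ, Pi.single_apply, mul_comm]
    · simp [sharpOf]


end
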